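/- Suppose π_1 and π_2 are sequences of distinct operations satisfying the no-join property, w_1 ∈ π_1 ∩ π_2, the prefix of π_2 ending at w_1 contains z−1 writes to X_2 (of values v_1,...,v_{z-1}, in that order), π_1 satisfies the sequential specification of X_2, and π_1 contains a read r of X_2 after w_1. Then r does not return any of v_1,...,v_{z-2}; if it returns a value written in π_1, that value is v_{z-1} or the value of a write to X_2 occurring in π_1 after w_1. -/

import Mathlib

/-- Data of a register operation: the register it accesses, whether it is a
write, and its value (`some v` = value written / returned; `none` = ⊥). -/
structure OpData (Reg Val : Type) where
  reg : Reg
  isWrite : Bool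
  val : Option Val

variable {Op Reg Val : Type}

/-- `o` is a write operation to register `X`. -/
def isWr (d : Op → OpData Reg Val) (X : Reg) (o : Op) : Prop :=
  (d o).reg = X ∧ (d o).isWrite = true

/-- `o` is a read operation of register `X`. -/
def isRd (d : Op → OpData Reg Val) (X : Reg) (o : Op) : Prop :=
  (d o).reg = X ∧ (d o).isWrite = false

/-- A sequential sequence `π` satisfies the sequential specification of
register `X`: every read of `X` returns the value of the most recent
preceding write to `X`, or the initial value ⊥ (`none`) if there is none. -/
def SeqSpec (d : Op → OpData Reg Val) (X : Reg) (π : List Op) : Prop :=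
  ∀ l1 o l2, π = l1 ++ o :: l2 → isRd d X o →
    ((∀ w ∈ l1, ¬ isWr d X w) ∧ (d o).val = none) ∨
    (∃ a w b, l1 = a ++ w :: b ∧ isWr d X w ∧ (d w).val = (d o).val ∧
      ∀ w' ∈ b, ¬ isWr d X w')

/-- `pfx π o` is the prefix of `π` ending with `o` (i.e. `π^o`). -/
def pfx [DecidableEq Op] (π : List Op) (o : Op) : List Op :=
  π.take (π.idxOf o + 1)

/-- The no-join property: for every operation in both sequences, the
prefixes ending at it coincide. -/
def NoJoin [DecidableEq Op] (π₁ π₂ : List Op) : Prop :=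
  ∀ o, o ∈ π₁ → o ∈ π₂ → pfx π₁ o = pfx π₂ o

/-- `o` occurs strictly before `o'` in the sequence `π`. -/
def before [DecidableEq Op] (π : List Op) (o o' : Op) : Prop :=
  o ∈ π ∧ o' ∈ π ∧ π.idxOf o < π.idxOf o'

/-!
By no-join, the prefix of `π₁` ending at `w₁` is that of `π₂`, so its last write to `X₂`
is `w (z-1)`. By the sequential specification, `r` returns the value of the last write `w`
to `X₂` preceding it in `π₁`; as `w (z-1)` precedes `r`, `w` is at or after `w (z-1)`,
hence either is `w (z-1)` or comes after `w₁`. Since written values are distinct, every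
write whose value `r` returns is `w`, and no `w k` with `k ≤ z-2` is of either kind.
-/

namespace List

variable {α : Type*} [DecidableEq α]

theorem idxOf_le_idxOf_of_mem_append_cons {s t : List α} {x y : α} (hy : y ∉ s)
    (hx : x ∈ s ++ y :: t) (hxt : x ∉ t) : (s ++ y :: t).idxOf x ≤ (s ++ y :: t).idxOf y := by
  have hys : (s ++ y :: t).idxOf y = s.length := by simp [idxOf_append_of_notMem hy]
  rw [mem_append, mem_cons] at hx
  rcases hx with hxs | rfl | hxt'
  · rw [hys, idxOf_append_of_mem hxs]
    exact (idxOf_lt_length_of_mem hxs).le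
  · exact le_rfl
  · exact absurd hxt' hxt

theorem Nodup.idxOf_le_of_filter_eq_append_singleton {l L : List α} {p : α → Bool} {x y : α}
    (hl : l.Nodup) (h : l.filter p = L ++ [y]) (hx : x ∈ l) (hpx : p x) :
    l.idxOf x ≤ l.idxOf y := by
  obtain ⟨l₁, l₂, rfl, -, hl₂⟩ := filter_eq_append_iff.1 h
  obtain ⟨m, t, rfl, -, -, ht⟩ := filter_eq_cons_iff.1 hl₂
  have ht : ∀ a ∈ t, ¬p a := filter_eq_nil_iff.1 ht
  rw [← append_assoc] at hl hx ⊢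
  exact idxOf_le_idxOf_of_mem_append_cons
    (fun hy => (nodup_middle.1 hl).notMem (mem_append_left _ hy)) hx fun hxt => ht x hxt hpx

end List

theorem isWr_iff_beq [DecidableEq Reg] {d : Op → OpData Reg Val} {X : Reg} {o : Op} :
    isWr d X o ↔ ((d o).reg == X && (d o).isWrite) = true := by
  simp [isWr]

section Sequences

variable [DecidableEq Op] {d : Op → OpData Reg Val} {X : Reg} {π : List Op} {o x y r : Op}

theorem pfx_prefix (π : List Op) (o : Op) : pfx π o <+: π :=
  List.take_prefix _ _

theorem mem_pfx_iff (hx : x ∈ π) : x ∈ pfx π o ↔ π.idxOf x ≤ π.idxOf o := by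
  rw [pfx, List.mem_take_iff_idxOf_lt hx, Nat.lt_succ_iff]

theorem not_before_of_mem_pfx (hx : x ∈ pfx π o) : ¬before π o x := fun h =>
  absurd ((mem_pfx_iff h.2.1).1 hx) (not_le.2 h.2.2)

theorem idxOf_le_of_filter_pfx_eq_append_singleton {p : Op → Bool} {L : List Op}
    (hπ : π.Nodup) (h : (pfx π o).filter p = L ++ [y]) (hx : x ∈ pfx π o) (hpx : p x) :
    π.idxOf x ≤ π.idxOf y := by
  have hy : y ∈ pfx π o :=
    (List.mem_filter.1 (h ▸ List.mem_append_right L (List.mem_singleton_self y))).1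
  rw [← (pfx_prefix π o).idxOf_eq_of_mem hx, ← (pfx_prefix π o).idxOf_eq_of_mem hy]
  exact ((pfx_prefix π o).sublist.nodup hπ).idxOf_le_of_filter_eq_append_singleton h hx hpx

theorem SeqSpec.exists_last_write_before (hspec : SeqSpec d X π) (hπ : π.Nodup)
    (hr : isRd d X r) (hy : isWr d X y) (hyr : before π y r) :
    ∃ w ∈ π, isWr d X w ∧ (d w).val = (d r).val ∧
      ∀ x, isWr d X x → before π x r → π.idxOf x ≤ π.idxOf w := by
  obtain ⟨s, t, hst⟩ := List.append_of_mem hyr.2.1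
  have hs : s <+: π := ⟨r :: t, hst.symm⟩
  have hrs : π.idxOf r = s.length := by
    have hr : r ∉ s := fun h =>
      (List.nodup_middle.1 (hst ▸ hπ)).notMem (List.mem_append_left t h)
    simp [hst, List.idxOf_append_of_notMem hr]
  have hmem : ∀ x, before π x r → x ∈ s := fun x hx =>
    (hs.mem_iff_idxOf_lt_length x).2 (hrs ▸ hx.2.2)
  rcases hspec s r t hst hr with ⟨hnone, -⟩ | ⟨a, w, b, rfl, hw, hval, hb⟩
  · exact absurd hy (hnone y (hmem y hyr))
  refine ⟨w, hs.subset (by simp), hw, hval, fun x hx hxr => ?_⟩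
  have hxs := hmem x hxr
  have hws : w ∉ a := fun h =>
    (List.nodup_middle.1 (hs.sublist.nodup hπ)).notMem (List.mem_append_left b h)
  rw [← hs.idxOf_eq_of_mem hxs, ← hs.idxOf_eq_of_mem (by simp)]
  exact List.idxOf_le_idxOf_of_mem_append_cons hws hxs fun hxb => hb x hxb hx

theorem SeqSpec.exists_write_read_eq_or_before (hspec : SeqSpec d X π) (hπ : π.Nodup)
    (hr : isRd d X r) (hor : before π o r) (hy : y ∈ pfx π o) (hyw : isWr d X y)
    (hylast : ∀ x ∈ pfx π o, isWr d X x → π.idxOf x ≤ π.idxOf y) :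
    ∃ w ∈ π, isWr d X w ∧ (d w).val = (d r).val ∧ (w = y ∨ before π o w) := by
  have hyπ : y ∈ π := (pfx_prefix π o).subset hy
  have hyo := (mem_pfx_iff hyπ).1 hy
  have hor_lt := hor.2.2
  obtain ⟨w, hwπ, hw, hval, hwlast⟩ :=
    hspec.exists_last_write_before hπ hr hyw ⟨hyπ, hor.2.1, by omega⟩
  refine ⟨w, hwπ, hw, hval, ?_⟩
  by_cases hwo : π.idxOf w ≤ π.idxOf o
  · have hw_le_y := hylast w ((mem_pfx_iff hwπ).2 hwo) hw
    have hy_le_w := hwlast y hyw ⟨hyπ, hor.2.1, by omega⟩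
    exact Or.inl ((List.idxOf_inj hwπ).1 (le_antisymm hw_le_y hy_le_w))
  · exact Or.inr ⟨hor.1, hwπ, not_le.1 hwo⟩

end Sequences

theorem nojoin_read_after_fork_not_old_value_general
    {Op Reg Val : Type} [DecidableEq Op] [DecidableEq Reg]
    (d : Op → OpData Reg Val) (X2 : Reg)
    (z : ℕ) (hz : 2 ≤ z) (w : ℕ → Op) (v : ℕ → Val)
    (hvinj : Function.Injective v)
    (π₁ π₂ : List Op) (hnd1 : π₁.Nodup)
    (hNJ : NoJoin π₁ π₂)
    (w1 r : Op) (hw1 : w1 ∈ π₁) (hw1' : w1 ∈ π₂)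
    (hpfxw : (pfx π₂ w1).filter (fun o => (d o).reg == X2 && (d o).isWrite)
      = (List.range (z - 1)).map (fun k => w (k + 1)))
    (hwv : ∀ k, 1 ≤ k → k ≤ z - 1 → (d (w k)).val = some (v k))
    (hspec : SeqSpec d X2 π₁)
    (hrR : isRd d X2 r) (hord : before π₁ w1 r)
    (hdist : ∀ o o', (o ∈ π₁ ∨ o ∈ π₂) → (o' ∈ π₁ ∨ o' ∈ π₂) →
      isWr d X2 o → isWr d X2 o' → (d o).val = (d o').val → o = o') :
    (∀ k, 1 ≤ k → k ≤ z - 2 → (d r).val ≠ some (v k)) ∧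
    (∀ w', w' ∈ π₁ → isWr d X2 w' → (d r).val = (d w').val →
      w' = w (z - 1) ∨ before π₁ w1 w') := by
  rw [← hNJ w1 hw1 hw1'] at hpfxw
  have hwrites : ∀ k, 1 ≤ k → k ≤ z - 1 → w k ∈ pfx π₁ w1 ∧ isWr d X2 (w k) := by
    intro k hk1 hk2
    have hk : w k ∈ (pfx π₁ w1).filter _ :=
      hpfxw ▸ List.mem_map.2 ⟨k - 1, List.mem_range.2 (by omega), by congr 1; omega⟩
    exact ⟨(List.mem_filter.1 hk).1, isWr_iff_beq.2 (List.mem_filter.1 hk).2⟩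
  have hlast : (pfx π₁ w1).filter (fun o => (d o).reg == X2 && (d o).isWrite)
      = (List.range (z - 2)).map (fun k => w (k + 1)) ++ [w (z - 1)] := by
    obtain ⟨m, rfl⟩ : ∃ m, z = m + 2 := ⟨z - 2, by omega⟩
    simp [hpfxw, List.range_succ]
  obtain ⟨hyP, hyW⟩ := hwrites (z - 1) (by omega) le_rfl
  obtain ⟨w'', hw''π, hw'', hval, hcases⟩ := hspec.exists_write_read_eq_or_before hnd1 hrR hord
    hyP hyW fun x hx hxW => idxOf_le_of_filter_pfx_eq_append_singleton hnd1 hlast hx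
      (isWr_iff_beq.1 hxW)
  have hread : ∀ w' ∈ π₁, isWr d X2 w' → (d r).val = (d w').val → w' = w'' :=
    fun w' hw'π hw' hv => hdist _ _ (Or.inl hw'π) (Or.inl hw''π) hw' hw'' (hv ▸ hval).symm
  refine ⟨fun k hk1 hk2 hvk => ?_, fun w' hw'π hw' hv => hread w' hw'π hw' hv ▸ hcases⟩
  obtain ⟨hkP, hkW⟩ := hwrites k hk1 (by omega)
  have hk := hread _ ((pfx_prefix π₁ w1).subset hkP) hkW (by rw [hvk, hwv k hk1 (by omega)])
  rcases hcases with hlast_eq | hafter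
  · have hv : some (v k) = some (v (z - 1)) := by
      rw [← hwv k hk1 (by omega), ← hwv (z - 1) (by omega) le_rfl, hk, hlast_eq]
    exact absurd (hvinj (Option.some_inj.1 hv)) (by omega)
  · exact not_before_of_mem_pfx hkP (hk ▸ hafter)

/-- If the prefix of `π₂` ending at `w₁` contains exactly the
writes `w 1, …, w (z-1)` to `X₂` (of values `v 1, …, v (z-1)`, in order),
the sequences satisfy no-join, and `π₁` contains a read `r` of `X₂` after
`w₁`, then `r` returns none of `v 1, …, v (z-2)`; if it returns a value
written in `π₁`, the matching write is `w (z-1)` or a write after `w₁`. -/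
theorem nojoin_read_after_fork_not_old_value
    {Op Reg Val : Type} [DecidableEq Op] [DecidableEq Reg]
    (d : Op → OpData Reg Val) (X2 : Reg)
    (z : ℕ) (hz : 2 ≤ z) (w : ℕ → Op) (v : ℕ → Val)
    (hvinj : Function.Injective v)
    (π₁ π₂ : List Op) (hnd1 : π₁.Nodup) (hnd2 : π₂.Nodup)
    (hNJ : NoJoin π₁ π₂)
    (w1 r : Op) (hw1 : w1 ∈ π₁) (hw1' : w1 ∈ π₂)
    (hpfxw : (pfx π₂ w1).filter (fun o => (d o).reg == X2 && (d o).isWrite)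
      = (List.range (z - 1)).map (fun k => w (k + 1)))
    (hwv : ∀ k, 1 ≤ k → k ≤ z - 1 → (d (w k)).val = some (v k))
    (hspec : SeqSpec d X2 π₁)
    (hrR : isRd d X2 r) (hord : before π₁ w1 r)
    (hdist : ∀ o o', (o ∈ π₁ ∨ o ∈ π₂) → (o' ∈ π₁ ∨ o' ∈ π₂) →
      isWr d X2 o → isWr d X2 o' → (d o).val = (d o').val → o = o') :
    (∀ k, 1 ≤ k → k ≤ z - 2 → (d r).val ≠ some (v k)) ∧
    (∀ w', w' ∈ π₁ → isWr d X2 w' → (d r).val = (d w').val →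
      w' = w (z - 1) ∨ before π₁ w1 w') :=
  nojoin_read_after_fork_not_old_value_general d X2 z hz w v hvinj π₁ π₂ hnd1 hNJ w1 r hw1 hw1'
    hpfxw hwv hspec hrR hord hdist
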